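/- arXiv:2009.12945 — 6 statements merged into one kernel-verified Lean document; each statement's English description precedes it below -/
import Mathlib

section
/- Assume 1+α₁β > 0, 1+α₂β > 0, μ − k₁² − k₂² > 0, and F(k) < μ, where F(k) = (1 + 2(1+β²)/(1+α₁β))k₁² + (1 + 2(1+β²)/(1+α₂β))k₂². Then the symmetric matrix 𝒟(k) with entries D_xx = 2k₁²(1+β²)/R₀² − (α₁β+1), D_yy = 2k₂²(1+β²)/R₀² − (α₂β+1), D_xy = 2k₁k₂(1+β²)/R₀² (with R₀² = μ − k₁² − k₂²) is negative definite. -/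
/-!
Write `a = 1 + α₁β`, `b = 1 + α₂β`, `R = μ - k₁² - k₂²` and `c = 2(1 + β²)`. Then
`R · Q(q) = c (k₁q₁ + k₂q₂)² - R (a q₁² + b q₂²)`, and the hypothesis on `F` says exactly
`c (k₁²/a + k₂²/b) < R` (so in particular `R > 0`). The weighted Cauchy–Schwarz inequality
`(k₁q₁ + k₂q₂)² ≤ (k₁²/a + k₂²/b)(a q₁² + b q₂²)` therefore makes the rank-one part strictly
smaller than the positive definite diagonal part.
-/

theorem sq_add_mul_le_weighted {a b : ℝ} (ha : 0 < a) (hb : 0 < b) (x₁ x₂ y₁ y₂ : ℝ) :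
    (x₁ * y₁ + x₂ * y₂) ^ 2 ≤ (x₁ ^ 2 / a + x₂ ^ 2 / b) * (a * y₁ ^ 2 + b * y₂ ^ 2) := by
  have hgap : (x₁ ^ 2 / a + x₂ ^ 2 / b) * (a * y₁ ^ 2 + b * y₂ ^ 2) - (x₁ * y₁ + x₂ * y₂) ^ 2
      = (b * x₁ * y₂ - a * x₂ * y₁) ^ 2 / (a * b) := by
    field_simp
    ring
  have : 0 ≤ (b * x₁ * y₂ - a * x₂ * y₁) ^ 2 / (a * b) := by positivity
  linarith

theorem diag_form_pos {a b q₁ q₂ : ℝ} (ha : 0 < a) (hb : 0 < b) (hq : (q₁, q₂) ≠ (0, 0)) :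
    0 < a * q₁ ^ 2 + b * q₂ ^ 2 := by
  rcases ne_or_eq q₁ 0 with hq₁ | rfl
  · exact add_pos_of_pos_of_nonneg (by positivity) (by positivity)
  · have hq₂ : q₂ ≠ 0 := fun h => hq (by rw [h])
    positivity

theorem rank_one_lt_diag_form {a b c R : ℝ} (ha : 0 < a) (hb : 0 < b) (hc : 0 ≤ c)
    {k₁ k₂ : ℝ} (hk : c * (k₁ ^ 2 / a + k₂ ^ 2 / b) < R)
    {q₁ q₂ : ℝ} (hq : (q₁, q₂) ≠ (0, 0)) :
    c * (k₁ * q₁ + k₂ * q₂) ^ 2 < R * (a * q₁ ^ 2 + b * q₂ ^ 2) :=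
  calc c * (k₁ * q₁ + k₂ * q₂) ^ 2
      ≤ c * ((k₁ ^ 2 / a + k₂ ^ 2 / b) * (a * q₁ ^ 2 + b * q₂ ^ 2)) :=
        mul_le_mul_of_nonneg_left (sq_add_mul_le_weighted ha hb _ _ _ _) hc
    _ = c * (k₁ ^ 2 / a + k₂ ^ 2 / b) * (a * q₁ ^ 2 + b * q₂ ^ 2) := (mul_assoc _ _ _).symm
    _ < R * (a * q₁ ^ 2 + b * q₂ ^ 2) := mul_lt_mul_of_pos_right hk (diag_form_pos ha hb hq)

theorem D_negdef_inside_ellipse_general (α₁ α₂ β μ k₁ k₂ : ℝ)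
    (h1 : 1 + α₁ * β > 0) (h2 : 1 + α₂ * β > 0)
    (hF : (1 + 2 * (1 + β ^ 2) / (1 + α₁ * β)) * k₁ ^ 2
        + (1 + 2 * (1 + β ^ 2) / (1 + α₂ * β)) * k₂ ^ 2 < μ) :
    let R0sq := μ - k₁ ^ 2 - k₂ ^ 2
    let Dxx := 2 * k₁ ^ 2 * (1 + β ^ 2) / R0sq - (α₁ * β + 1)
    let Dyy := 2 * k₂ ^ 2 * (1 + β ^ 2) / R0sq - (α₂ * β + 1)
    let Dxy := 2 * k₁ * k₂ * (1 + β ^ 2) / R0sq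
    ∀ q₁ q₂ : ℝ, (q₁, q₂) ≠ (0, 0) →
      Dxx * q₁ ^ 2 + 2 * Dxy * q₁ * q₂ + Dyy * q₂ ^ 2 < 0 := by
  intro R0sq Dxx Dyy Dxy q₁ q₂ hq
  have hk : 2 * (1 + β ^ 2) * (k₁ ^ 2 / (1 + α₁ * β) + k₂ ^ 2 / (1 + α₂ * β)) < R0sq := by
    linear_combination hF
  have hR : 0 < R0sq := by
    refine lt_of_le_of_lt (mul_nonneg (by positivity) ?_) hk
    exact add_nonneg (div_nonneg (sq_nonneg _) h1.le) (div_nonneg (sq_nonneg _) h2.le)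
  have hlt := rank_one_lt_diag_form h1 h2 (by positivity) hk hq
  have hform : Dxx * q₁ ^ 2 + 2 * Dxy * q₁ * q₂ + Dyy * q₂ ^ 2
      = (2 * (1 + β ^ 2) * (k₁ * q₁ + k₂ * q₂) ^ 2
        - R0sq * ((1 + α₁ * β) * q₁ ^ 2 + (1 + α₂ * β) * q₂ ^ 2)) / R0sq := by
    simp only [Dxx, Dyy, Dxy]
    field_simp
    ring
  rw [hform]
  exact div_neg_of_neg_of_pos (sub_neg.2 hlt) hR

/-- Inside the ellipse `F(k) = μ`, with `1+α₁β > 0` and `1+α₂β > 0`, the matrix 𝒟(k)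
is negative definite. -/
theorem D_negdef_inside_ellipse (α₁ α₂ β μ k₁ k₂ : ℝ)
    (h1 : 1 + α₁ * β > 0) (h2 : 1 + α₂ * β > 0)
    (hR : μ - k₁ ^ 2 - k₂ ^ 2 > 0)
    (hF : (1 + 2 * (1 + β ^ 2) / (1 + α₁ * β)) * k₁ ^ 2
        + (1 + 2 * (1 + β ^ 2) / (1 + α₂ * β)) * k₂ ^ 2 < μ) :
    let R0sq := μ - k₁ ^ 2 - k₂ ^ 2
    let Dxx := 2 * k₁ ^ 2 * (1 + β ^ 2) / R0sq - (α₁ * β + 1)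
    let Dyy := 2 * k₂ ^ 2 * (1 + β ^ 2) / R0sq - (α₂ * β + 1)
    let Dxy := 2 * k₁ * k₂ * (1 + β ^ 2) / R0sq
    ∀ q₁ q₂ : ℝ, (q₁, q₂) ≠ (0, 0) →
      Dxx * q₁ ^ 2 + 2 * Dxy * q₁ * q₂ + Dyy * q₂ ^ 2 < 0 :=
  D_negdef_inside_ellipse_general α₁ α₂ β μ k₁ k₂ h1 h2 hF
end

section
/- Assume 1+α₁β > 0, 1+α₂β > 0, μ − k₁² − k₂² > 0, and F(k) > μ, with F as above. Then det 𝒟(k) < 0, where 𝒟(k) is the symmetric matrix with D_xx = 2k₁²(1+β²)/R₀² − (α₁β+1), D_yy = 2k₂²(1+β²)/R₀² − (α₂β+1), D_xy = 2k₁k₂(1+β²)/R₀², R₀² = μ − k₁² − k₂². Consequently there exist nonzero vectors q, q̃ ∈ ℝ² with 𝒬(q;k) < 0 < 𝒬(q̃;k), where 𝒬(q;k) = D_xx q₁² + 2D_xy q₁q₂ + D_yy q₂². -/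
/-!
Write `r = μ - k₁² - k₂²`, `c = 2(1+β²)` and `aᵢ = 1 + αᵢβ`. Then `𝒟(k) = (c/r) k kᵀ - diag(a₁, a₂)`
is a rank-one perturbation of a negative definite diagonal matrix, and its determinant is
`a₁a₂ (r - (c k₁²/a₁ + c k₂²/a₂)) / r`. The condition `F(k) > μ` says exactly that
`c k₁²/a₁ + c k₂²/a₂ > r`, so the determinant is negative, and a binary quadratic form with
negative determinant takes both signs.
-/

def binaryQuadForm (A B C : ℝ) (q : ℝ × ℝ) : ℝ :=
  A * q.1 ^ 2 + 2 * B * q.1 * q.2 + C * q.2 ^ 2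

lemma binaryQuadForm_neg (A B C : ℝ) (q : ℝ × ℝ) :
    binaryQuadForm (-A) (-B) (-C) q = -binaryQuadForm A B C q := by
  unfold binaryQuadForm; ring

lemma exists_binaryQuadForm_neg_of_det_neg {A B C : ℝ} (h : A * C - B ^ 2 < 0) :
    ∃ q : ℝ × ℝ, q ≠ 0 ∧ binaryQuadForm A B C q < 0 := by
  rcases lt_trichotomy A 0 with hA | rfl | hA
  · exact ⟨(1, 0), by simp [Prod.ext_iff], by simpa [binaryQuadForm] using hA⟩
  · have hB : B ≠ 0 := by rintro rfl; simp at h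
    -- on the line `y = B` the form `2Bxy + Cy²` equals `B² (2x + C)`
    refine ⟨(-(C + 1) / 2, B), by simp [Prod.ext_iff, hB], ?_⟩
    have hval : binaryQuadForm 0 B C (-(C + 1) / 2, B) = -B ^ 2 := by
      unfold binaryQuadForm; ring
    rw [hval]
    exact neg_neg_of_pos (by positivity)
  · -- `(-B, A)` is orthogonal to `(1, 0)` with respect to the form
    refine ⟨(-B, A), by simp [Prod.ext_iff, hA.ne'], ?_⟩
    have hval : binaryQuadForm A B C (-B, A) = A * (A * C - B ^ 2) := by
      unfold binaryQuadForm; ring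
    rw [hval]
    exact mul_neg_of_pos_of_neg hA h

lemma exists_binaryQuadForm_pos_of_det_neg {A B C : ℝ} (h : A * C - B ^ 2 < 0) :
    ∃ q : ℝ × ℝ, q ≠ 0 ∧ 0 < binaryQuadForm A B C q := by
  obtain ⟨q, hq, hneg⟩ :=
    exists_binaryQuadForm_neg_of_det_neg (A := -A) (B := -B) (C := -C) (by linarith)
  exact ⟨q, hq, by rw [binaryQuadForm_neg] at hneg; linarith⟩

lemma det_rank_one_sub_diag {a b c r : ℝ} (u v : ℝ) (ha : a ≠ 0) (hb : b ≠ 0) (hr : r ≠ 0) :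
    (c * u ^ 2 / r - a) * (c * v ^ 2 / r - b) - (c * u * v / r) ^ 2
      = a * b * (r - (c * u ^ 2 / a + c * v ^ 2 / b)) / r := by
  field_simp
  ring

lemma det_rank_one_sub_diag_neg {a b c r u v : ℝ} (ha : 0 < a) (hb : 0 < b) (hr : 0 < r)
    (h : r < c * u ^ 2 / a + c * v ^ 2 / b) :
    (c * u ^ 2 / r - a) * (c * v ^ 2 / r - b) - (c * u * v / r) ^ 2 < 0 := by
  rw [det_rank_one_sub_diag u v ha.ne' hb.ne' hr.ne']
  exact div_neg_of_neg_of_pos (mul_neg_of_pos_of_neg (mul_pos ha hb) (by linarith)) hr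

/-- Outside the ellipse `F(k) = μ`, with `1+α₁β > 0` and `1+α₂β > 0`, `det 𝒟(k) < 0` and the
quadratic form 𝒬 is indefinite. -/
theorem D_indefinite_outside_ellipse (α₁ α₂ β μ k₁ k₂ : ℝ)
    (h1 : 1 + α₁ * β > 0) (h2 : 1 + α₂ * β > 0)
    (hR : μ - k₁ ^ 2 - k₂ ^ 2 > 0)
    (hF : (1 + 2 * (1 + β ^ 2) / (1 + α₁ * β)) * k₁ ^ 2
        + (1 + 2 * (1 + β ^ 2) / (1 + α₂ * β)) * k₂ ^ 2 > μ) :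
    let R0sq := μ - k₁ ^ 2 - k₂ ^ 2
    let Dxx := 2 * k₁ ^ 2 * (1 + β ^ 2) / R0sq - (α₁ * β + 1)
    let Dyy := 2 * k₂ ^ 2 * (1 + β ^ 2) / R0sq - (α₂ * β + 1)
    let Dxy := 2 * k₁ * k₂ * (1 + β ^ 2) / R0sq
    Dxx * Dyy - Dxy ^ 2 < 0 ∧
      ∃ q qt : ℝ × ℝ, q ≠ 0 ∧ qt ≠ 0 ∧
        Dxx * q.1 ^ 2 + 2 * Dxy * q.1 * q.2 + Dyy * q.2 ^ 2 < 0 ∧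
        0 < Dxx * qt.1 ^ 2 + 2 * Dxy * qt.1 * qt.2 + Dyy * qt.2 ^ 2 := by
  intro R0sq Dxx Dyy Dxy
  set c := 2 * (1 + β ^ 2)
  have hF' : R0sq < c * k₁ ^ 2 / (1 + α₁ * β) + c * k₂ ^ 2 / (1 + α₂ * β) := by
    have hsplit : (1 + c / (1 + α₁ * β)) * k₁ ^ 2 + (1 + c / (1 + α₂ * β)) * k₂ ^ 2
        = k₁ ^ 2 + k₂ ^ 2 + (c * k₁ ^ 2 / (1 + α₁ * β) + c * k₂ ^ 2 / (1 + α₂ * β)) := by ring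
    linarith
  have hD : Dxx * Dyy - Dxy ^ 2
      = (c * k₁ ^ 2 / R0sq - (1 + α₁ * β)) * (c * k₂ ^ 2 / R0sq - (1 + α₂ * β))
        - (c * k₁ * k₂ / R0sq) ^ 2 := by
    simp only [Dxx, Dyy, Dxy, c]; ring
  have hdet : Dxx * Dyy - Dxy ^ 2 < 0 := hD ▸ det_rank_one_sub_diag_neg h1 h2 hR hF'
  obtain ⟨q, hq, hneg⟩ := exists_binaryQuadForm_neg_of_det_neg hdet
  obtain ⟨qt, hqt, hpos⟩ := exists_binaryQuadForm_pos_of_det_neg hdet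
  exact ⟨hdet, q, qt, hq, hqt, hneg, hpos⟩
end

section
/- Assume 1+α₁β < 0 and 1+α₂β < 0 and μ − k₁² − k₂² > 0. Then the symmetric matrix 𝒟(k) with entries D_xx = 2k₁²(1+β²)/R₀² − (α₁β+1), D_yy = 2k₂²(1+β²)/R₀² − (α₂β+1), D_xy = 2k₁k₂(1+β²)/R₀², where R₀² = μ − k₁² − k₂², is positive definite. -/
/-- When `1+α₁β < 0` and `1+α₂β < 0`, the matrix 𝒟(k) is positive definite. -/
theorem D_posdef_case_c (α₁ α₂ β μ k₁ k₂ : ℝ)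
    (h1 : 1 + α₁ * β < 0) (h2 : 1 + α₂ * β < 0)
    (hR : μ - k₁ ^ 2 - k₂ ^ 2 > 0) :
    let R0sq := μ - k₁ ^ 2 - k₂ ^ 2
    let Dxx := 2 * k₁ ^ 2 * (1 + β ^ 2) / R0sq - (α₁ * β + 1)
    let Dyy := 2 * k₂ ^ 2 * (1 + β ^ 2) / R0sq - (α₂ * β + 1)
    let Dxy := 2 * k₁ * k₂ * (1 + β ^ 2) / R0sq
    ∀ q₁ q₂ : ℝ, (q₁, q₂) ≠ (0, 0) →
      0 < Dxx * q₁ ^ 2 + 2 * Dxy * q₁ * q₂ + Dyy * q₂ ^ 2 := by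
  intro R0sq Dxx Dyy Dxy q₁ q₂ hq
  have hR0 : (0:ℝ) < R0sq := hR
  have hne : R0sq ≠ 0 := ne_of_gt hR0
  have key : Dxx * q₁ ^ 2 + 2 * Dxy * q₁ * q₂ + Dyy * q₂ ^ 2 =
      2 * (1 + β ^ 2) / R0sq * (k₁ * q₁ + k₂ * q₂) ^ 2
        + (-(α₁ * β + 1)) * q₁ ^ 2 + (-(α₂ * β + 1)) * q₂ ^ 2 := by
    show (2 * k₁ ^ 2 * (1 + β ^ 2) / R0sq - (α₁ * β + 1)) * q₁ ^ 2
        + 2 * (2 * k₁ * k₂ * (1 + β ^ 2) / R0sq) * q₁ * q₂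
        + (2 * k₂ ^ 2 * (1 + β ^ 2) / R0sq - (α₂ * β + 1)) * q₂ ^ 2 = _
    field_simp
    ring
  rw [key]
  have hq' : q₁ ≠ 0 ∨ q₂ ≠ 0 := by
    by_contra h
    push_neg at h
    exact hq (by simp [h.1, h.2])
  have ha : 0 < -(α₁ * β + 1) := by linarith
  have hb : 0 < -(α₂ * β + 1) := by linarith
  have hfirst : 0 ≤ 2 * (1 + β ^ 2) / R0sq * (k₁ * q₁ + k₂ * q₂) ^ 2 := by positivity
  rcases hq' with h | h
  · have : 0 < (-(α₁ * β + 1)) * q₁ ^ 2 := by positivity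
    nlinarith [sq_nonneg q₂, mul_nonneg hb.le (sq_nonneg q₂)]
  · have : 0 < (-(α₂ * β + 1)) * q₂ ^ 2 := by positivity
    nlinarith [mul_nonneg ha.le (sq_nonneg q₁)]
end

section
/- Under the hypotheses 1+α₁β < 0, 1+α₂β > 0, μ − k₁² − k₂² > 0, and F(k) > μ (with F(k) = (1 + 2(1+β²)/(1+α₁β))k₁² + (1 + 2(1+β²)/(1+α₂β))k₂²), the matrix 𝒟(k) defined by D_xx = 2k₁²(1+β²)/R₀² − (α₁β+1), D_yy = 2k₂²(1+β²)/R₀² − (α₂β+1), D_xy = 2k₁k₂(1+β²)/R₀² with R₀² = μ − k₁² − k₂² is positive definite. -/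
/-!
With `c = 2(1+β²)/R₀²` and `aᵢ = 1+αᵢβ` the matrix is `c k kᵀ - diag(a₁, a₂)`, whose
determinant is `a₁a₂ (1 - c (k₁²/a₁ + k₂²/a₂))`. Since `a₁a₂ < 0`, it is positive exactly when
`2(1+β²)(k₁²/a₁ + k₂²/a₂) > R₀²`, which is `F(k) > μ`; and `D_xx > 0` because `a₁ < 0`.
-/

theorem binary_quadratic_form_pos {a b c x y : ℝ} (ha : 0 < a) (hdet : b ^ 2 < a * c)
    (hxy : (x, y) ≠ (0, 0)) : 0 < a * x ^ 2 + 2 * b * x * y + c * y ^ 2 := by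
  have hsq : a * (a * x ^ 2 + 2 * b * x * y + c * y ^ 2)
      = (a * x + b * y) ^ 2 + (a * c - b ^ 2) * y ^ 2 := by
    ring
  refine pos_of_mul_pos_right (hsq ▸ ?_) ha.le
  rcases eq_or_ne y 0 with rfl | hy
  · have hx : a * x ≠ 0 := mul_ne_zero ha.ne' fun hx => hxy (by rw [hx])
    simpa using sq_pos_of_ne_zero hx
  · have : 0 < (a * c - b ^ 2) * y ^ 2 := mul_pos (sub_pos.2 hdet) (by positivity)
    positivity

theorem sq_lt_mul_of_rank_one_sub_diag {c a₁ a₂ k₁ k₂ : ℝ} (ha : a₁ * a₂ < 0)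
    (hc : 1 < c * (k₁ ^ 2 / a₁ + k₂ ^ 2 / a₂)) :
    (c * k₁ * k₂) ^ 2 < (c * k₁ ^ 2 - a₁) * (c * k₂ ^ 2 - a₂) := by
  have ha₁ : a₁ ≠ 0 := left_ne_zero_of_mul ha.ne
  have ha₂ : a₂ ≠ 0 := right_ne_zero_of_mul ha.ne
  have hdet : (c * k₁ ^ 2 - a₁) * (c * k₂ ^ 2 - a₂) - (c * k₁ * k₂) ^ 2
      = a₁ * a₂ * (1 - c * (k₁ ^ 2 / a₁ + k₂ ^ 2 / a₂)) := by
    field_simp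
    ring
  exact sub_pos.1 (hdet ▸ mul_pos_of_neg_of_neg ha (sub_neg.2 hc))

/-- In the fully unstable region of case (b): `1+α₁β < 0`, `1+α₂β > 0`, and `F(k) > μ` imply
that 𝒟(k) is positive definite. -/
theorem D_posdef_case_b_fully_unstable (α₁ α₂ β μ k₁ k₂ : ℝ)
    (h1 : 1 + α₁ * β < 0) (h2 : 1 + α₂ * β > 0)
    (hR : μ - k₁ ^ 2 - k₂ ^ 2 > 0)
    (hF : (1 + 2 * (1 + β ^ 2) / (1 + α₁ * β)) * k₁ ^ 2
        + (1 + 2 * (1 + β ^ 2) / (1 + α₂ * β)) * k₂ ^ 2 > μ) :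
    let R0sq := μ - k₁ ^ 2 - k₂ ^ 2
    let Dxx := 2 * k₁ ^ 2 * (1 + β ^ 2) / R0sq - (α₁ * β + 1)
    let Dyy := 2 * k₂ ^ 2 * (1 + β ^ 2) / R0sq - (α₂ * β + 1)
    let Dxy := 2 * k₁ * k₂ * (1 + β ^ 2) / R0sq
    ∀ q₁ q₂ : ℝ, (q₁, q₂) ≠ (0, 0) →
      0 < Dxx * q₁ ^ 2 + 2 * Dxy * q₁ * q₂ + Dyy * q₂ ^ 2 := by
  intro R0sq Dxx Dyy Dxy q₁ q₂ hq
  set c := 2 * (1 + β ^ 2) / R0sq with hc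
  have hc_nonneg : 0 ≤ c := by positivity
  have hxx : Dxx = c * k₁ ^ 2 - (1 + α₁ * β) := by simp only [Dxx, c]; ring
  have hyy : Dyy = c * k₂ ^ 2 - (1 + α₂ * β) := by simp only [Dyy, c]; ring
  have hxy : Dxy = c * k₁ * k₂ := by simp only [Dxy, c]; ring
  have hF' : R0sq < 2 * (1 + β ^ 2) * (k₁ ^ 2 / (1 + α₁ * β) + k₂ ^ 2 / (1 + α₂ * β)) := by
    simp only [R0sq]
    linarith [show (1 + 2 * (1 + β ^ 2) / (1 + α₁ * β)) * k₁ ^ 2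
        + (1 + 2 * (1 + β ^ 2) / (1 + α₂ * β)) * k₂ ^ 2 = k₁ ^ 2 + k₂ ^ 2
          + 2 * (1 + β ^ 2) * (k₁ ^ 2 / (1 + α₁ * β) + k₂ ^ 2 / (1 + α₂ * β)) by ring]
  refine binary_quadratic_form_pos ?_ ?_ hq
  · rw [hxx]
    linarith [mul_nonneg hc_nonneg (sq_nonneg k₁)]
  · rw [hxx, hyy, hxy]
    refine sq_lt_mul_of_rank_one_sub_diag (mul_neg_of_neg_of_pos h1 h2) ?_
    rwa [hc, div_mul_eq_mul_div, one_lt_div hR]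
end

section
/- Under the hypotheses 1+α₁β < 0, 1+α₂β > 0, μ − k₁² − k₂² > 0, and F(k) < μ, the determinant det 𝒟(k) = (α₁β+1)(α₂β+1) − (2(1+β²)/R₀²)((α₁β+1)k₂² + (α₂β+1)k₁²) is negative, where R₀² = μ − k₁² − k₂² and F(k) = (1 + 2(1+β²)/(1+α₁β))k₁² + (1 + 2(1+β²)/(1+α₂β))k₂². -/
/-! With `a = 1 + α₁β < 0 < b = 1 + α₂β`, `c = 2(1 + β²)` and `R = μ - k₁² - k₂² > 0`, the condition
`F(k) < μ` reads `(c/a) k₁² + (c/b) k₂² < R`; multiplying by `ab < 0` reverses it to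
`abR < c (b k₁² + a k₂²)`, which is `det 𝒟(k) < 0` after dividing by `R`. -/

theorem mul_sub_div_mul_neg_of_div_mul_add_div_mul_lt {a b c R x y : ℝ} (ha : a < 0) (hb : 0 < b)
    (hR : 0 < R) (h : c / a * x + c / b * y < R) :
    a * b - c / R * (a * y + b * x) < 0 := by
  have hab : a * b < 0 := mul_neg_of_neg_of_pos ha hb
  have hcleared : a * b * (c / a * x + c / b * y) = c * (a * y + b * x) := by
    field_simp [ha.ne, hb.ne']
    ring
  have hreversed : a * b * R < c * (a * y + b * x) :=
    hcleared ▸ mul_lt_mul_of_neg_left h hab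
  rw [sub_neg, div_mul_eq_mul_div, lt_div_iff₀ hR]
  exact hreversed

/-- In the partly unstable region of case (b): `1+α₁β < 0`, `1+α₂β > 0`, and `F(k) < μ` imply
`det 𝒟(k) < 0`. -/
theorem detD_neg_case_b_partly_unstable (α₁ α₂ β μ k₁ k₂ : ℝ)
    (h1 : 1 + α₁ * β < 0) (h2 : 1 + α₂ * β > 0)
    (hR : μ - k₁ ^ 2 - k₂ ^ 2 > 0)
    (hF : (1 + 2 * (1 + β ^ 2) / (1 + α₁ * β)) * k₁ ^ 2
        + (1 + 2 * (1 + β ^ 2) / (1 + α₂ * β)) * k₂ ^ 2 < μ) :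
    (α₁ * β + 1) * (α₂ * β + 1)
      - (2 * (1 + β ^ 2) / (μ - k₁ ^ 2 - k₂ ^ 2))
          * ((α₁ * β + 1) * k₂ ^ 2 + (α₂ * β + 1) * k₁ ^ 2) < 0 := by
  rw [add_comm (α₁ * β), add_comm (α₂ * β)]
  exact mul_sub_div_mul_neg_of_div_mul_add_div_mul_lt h1 h2 hR (by linear_combination hF)
end

section
/- For the bulk oscillation base state k₁ = k₂ = 0, the matrix ℳ(q) has entries ℳ₁₁ = −2R₀² − |q|², ℳ₁₂ = α₁q₁² + α₂q₂², ℳ₂₁ = −2R₀²β − α₁q₁² − α₂q₂², ℳ₂₂ = −|q|². The real part of the eigenvalue branch of ℳ(q) passing through 0 at q = 0 has Taylor expansion whose quadratic part in (q₁,q₂) equals −(1+α₁β)q₁² − (1+α₂β)q₂²; equivalently, for the quadratic-in-q truncation, σ(q) = −(1+α₁β)q₁² − (1+α₂β)q₂² + O(|q|⁴). -/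
open Asymptotics Filter

set_option maxHeartbeats 1600000

/-- For the bulk oscillation base state `k = 0`, the eigenvalue branch of ℳ(q) through `0`
satisfies `σ(q) = −(1+α₁β)q₁² − (1+α₂β)q₂² + O(|q|⁴)`. -/
theorem small_eigenvalue_expansion (α₁ α₂ β R₀ : ℝ) (hR : R₀ > 0)
    (σ : ℝ × ℝ → ℝ)
    (hσ0 : σ 0 = 0)
    (hσcont : ContinuousAt σ 0)
    (hσev : ∀ᶠ q : ℝ × ℝ in nhds 0,
      σ q ^ 2
        - (-2 * (R₀ ^ 2 + q.1 ^ 2 + q.2 ^ 2)) * σ q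
        + ((-2 * R₀ ^ 2 - (q.1 ^ 2 + q.2 ^ 2)) * (-(q.1 ^ 2 + q.2 ^ 2))
            - (α₁ * q.1 ^ 2 + α₂ * q.2 ^ 2)
                * (-2 * R₀ ^ 2 * β - (α₁ * q.1 ^ 2 + α₂ * q.2 ^ 2))) = 0) :
    (fun q : ℝ × ℝ =>
        σ q + (1 + α₁ * β) * q.1 ^ 2 + (1 + α₂ * β) * q.2 ^ 2)
      =O[nhds (0 : ℝ × ℝ)] fun q => ‖q‖ ^ 4 := by
  set M : ℝ := |α₁| + |α₂| with hM
  set C₀ : ℝ := 2 * (2 * R₀ ^ 2 + 1) + 2 * R₀ ^ 2 * |β| * M + M ^ 2 with hC₀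
  set C₁ : ℝ := C₀ / R₀ ^ 2 with hC₁
  set K : ℝ := ((C₁ + 2) ^ 2 + M ^ 2) / (2 * R₀ ^ 2) with hK
  have hMnn : 0 ≤ M := by positivity
  have hC₀pos : 0 < C₀ := by positivity
  have hC₁pos : 0 < C₁ := by positivity
  -- eventual smallness of q
  have h1 : ∀ᶠ q : ℝ × ℝ in nhds 0, ‖q‖ < min (1/2) (R₀/2) := by
    have hb : Metric.ball (0 : ℝ × ℝ) (min (1/2) (R₀/2)) ∈ nhds (0 : ℝ × ℝ) :=
      Metric.ball_mem_nhds _ (by positivity)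
    filter_upwards [hb] with q hq
    simpa [Metric.mem_ball] using hq
  -- eventual smallness of σ
  have h2 : ∀ᶠ q : ℝ × ℝ in nhds 0, |σ q| < R₀ ^ 2 / 2 := by
    have ht : Filter.Tendsto σ (nhds 0) (nhds 0) := by
      have := hσcont.tendsto
      rwa [hσ0] at this
    have := Metric.tendsto_nhds.mp ht (R₀ ^ 2 / 2) (by positivity)
    simpa [Real.dist_eq] using this
  apply IsBigO.of_bound K
  filter_upwards [hσev, h1, h2] with q heq hq hσb
  have hr0 : (0 : ℝ) ≤ ‖q‖ := norm_nonneg q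
  have hr1 : ‖q‖ ≤ 1/2 := le_of_lt (lt_of_lt_of_le hq (min_le_left _ _))
  have hr2 : ‖q‖ ≤ R₀/2 := le_of_lt (lt_of_lt_of_le hq (min_le_right _ _))
  have hq1 : q.1 ^ 2 ≤ ‖q‖ ^ 2 := by
    have h := norm_fst_le q
    have h' : |q.1| ≤ ‖q‖ := by simpa using h
    nlinarith [abs_nonneg q.1, sq_abs q.1]
  have hq2 : q.2 ^ 2 ≤ ‖q‖ ^ 2 := by
    have h := norm_snd_le q
    have h' : |q.2| ≤ ‖q‖ := by simpa using h
    nlinarith [abs_nonneg q.2, sq_abs q.2]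
  have hq1nn : (0 : ℝ) ≤ q.1 ^ 2 := sq_nonneg _
  have hq2nn : (0 : ℝ) ≤ q.2 ^ 2 := sq_nonneg _
  have hrsq : ‖q‖ ^ 2 ≤ 1/4 := by
    have := pow_le_pow_left₀ hr0 hr1 2
    calc ‖q‖ ^ 2 ≤ (1/2 : ℝ) ^ 2 := this
      _ = 1/4 := by norm_num
  have hrsqR : ‖q‖ ^ 2 ≤ R₀ ^ 2 / 4 := by
    have := pow_le_pow_left₀ hr0 hr2 2
    calc ‖q‖ ^ 2 ≤ (R₀/2) ^ 2 := this
      _ = R₀ ^ 2 / 4 := by ring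
  -- bounds on P
  have hPu : α₁ * q.1 ^ 2 + α₂ * q.2 ^ 2 ≤ M * ‖q‖ ^ 2 := by
    nlinarith [le_abs_self α₁, le_abs_self α₂, abs_nonneg α₁, abs_nonneg α₂]
  have hPl : -(M * ‖q‖ ^ 2) ≤ α₁ * q.1 ^ 2 + α₂ * q.2 ^ 2 := by
    nlinarith [neg_abs_le α₁, neg_abs_le α₂, abs_nonneg α₁, abs_nonneg α₂]
  obtain ⟨hσl, hσu⟩ := abs_le.mp (le_of_lt hσb)
  -- key algebraic identity from the characteristic equation
  have hkey : σ q * (σ q + 2 * R₀ ^ 2 + 2 * (q.1 ^ 2 + q.2 ^ 2)) =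
      -((2 * R₀ ^ 2 + (q.1 ^ 2 + q.2 ^ 2)) * (q.1 ^ 2 + q.2 ^ 2)
        + 2 * R₀ ^ 2 * β * (α₁ * q.1 ^ 2 + α₂ * q.2 ^ 2)
        + (α₁ * q.1 ^ 2 + α₂ * q.2 ^ 2) ^ 2) := by
    linear_combination heq
  -- bound on the determinant-like term D
  have hDu : (2 * R₀ ^ 2 + (q.1 ^ 2 + q.2 ^ 2)) * (q.1 ^ 2 + q.2 ^ 2)
        + 2 * R₀ ^ 2 * β * (α₁ * q.1 ^ 2 + α₂ * q.2 ^ 2)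
        + (α₁ * q.1 ^ 2 + α₂ * q.2 ^ 2) ^ 2 ≤ C₀ * ‖q‖ ^ 2 := by
    have hb : β * (α₁ * q.1 ^ 2 + α₂ * q.2 ^ 2) ≤ |β| * (M * ‖q‖ ^ 2) := by
      cases le_or_gt 0 β with
      | inl h => nlinarith [le_abs_self β]
      | inr h => nlinarith [neg_abs_le β]
    have hsq : (α₁ * q.1 ^ 2 + α₂ * q.2 ^ 2) ^ 2 ≤ M ^ 2 * ‖q‖ ^ 2 := by
      nlinarith [sq_nonneg ‖q‖, mul_nonneg hMnn (sq_nonneg ‖q‖)]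
    have haux : (2 * R₀ ^ 2 + (q.1 ^ 2 + q.2 ^ 2)) * (q.1 ^ 2 + q.2 ^ 2)
        ≤ 2 * (2 * R₀ ^ 2 + 1) * ‖q‖ ^ 2 := by
      nlinarith [sq_nonneg (q.1 ^ 2 + q.2 ^ 2)]
    nlinarith [abs_nonneg β, mul_nonneg (abs_nonneg β) (mul_nonneg hMnn (sq_nonneg ‖q‖))]
  have hDl : -(C₀ * ‖q‖ ^ 2) ≤ (2 * R₀ ^ 2 + (q.1 ^ 2 + q.2 ^ 2)) * (q.1 ^ 2 + q.2 ^ 2)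
        + 2 * R₀ ^ 2 * β * (α₁ * q.1 ^ 2 + α₂ * q.2 ^ 2)
        + (α₁ * q.1 ^ 2 + α₂ * q.2 ^ 2) ^ 2 := by
    have hb : -(|β| * (M * ‖q‖ ^ 2)) ≤ β * (α₁ * q.1 ^ 2 + α₂ * q.2 ^ 2) := by
      cases le_or_gt 0 β with
      | inl h => nlinarith [neg_abs_le β, le_abs_self β]
      | inr h => nlinarith [neg_abs_le β, le_abs_self β]
    have haux : 0 ≤ (2 * R₀ ^ 2 + (q.1 ^ 2 + q.2 ^ 2)) * (q.1 ^ 2 + q.2 ^ 2) := by positivity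
    nlinarith [sq_nonneg (α₁ * q.1 ^ 2 + α₂ * q.2 ^ 2), abs_nonneg β,
      mul_nonneg (abs_nonneg β) (mul_nonneg hMnn (sq_nonneg ‖q‖))]
  -- σ = O(‖q‖²)
  have hC1r : 0 ≤ C₁ * ‖q‖ ^ 2 := by positivity
  have hC0r : 0 ≤ C₀ * ‖q‖ ^ 2 := by positivity
  have hfac : (3 / 2) * R₀ ^ 2 ≤ σ q + 2 * R₀ ^ 2 + 2 * (q.1 ^ 2 + q.2 ^ 2) := by
    linarith
  have hσu2 : σ q ≤ C₁ * ‖q‖ ^ 2 := by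
    rcases le_or_gt (σ q) 0 with h | h
    · linarith
    · have hmul : σ q * (2 * R₀ ^ 2) ≤ σ q * (σ q + 2 * R₀ ^ 2 + 2 * (q.1 ^ 2 + q.2 ^ 2)) :=
        mul_le_mul_of_nonneg_left (by linarith) h.le
      have h2' : σ q * (2 * R₀ ^ 2) ≤ C₀ * ‖q‖ ^ 2 := by
        rw [hkey] at hmul; linarith
      rw [hC₁, div_mul_eq_mul_div, le_div_iff₀ (by positivity : (0:ℝ) < R₀ ^ 2)]
      linarith
  have hσl2 : -(C₁ * ‖q‖ ^ 2) ≤ σ q := by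
    rcases le_or_gt 0 (σ q) with h | h
    · linarith
    · have hmul : σ q * (σ q + 2 * R₀ ^ 2 + 2 * (q.1 ^ 2 + q.2 ^ 2)) ≤ σ q * ((3 / 2) * R₀ ^ 2) :=
        mul_le_mul_of_nonpos_left hfac h.le
      rw [hkey] at hmul
      have h2' : -(C₀ * ‖q‖ ^ 2) ≤ σ q * ((3 / 2) * R₀ ^ 2) := le_trans (neg_le_neg hDu) hmul
      rw [hC₁, neg_le, div_mul_eq_mul_div, le_div_iff₀ (by positivity : (0:ℝ) < R₀ ^ 2)]
      linarith
  -- exact identity for the error term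
  have hE : 2 * R₀ ^ 2 * (σ q + (1 + α₁ * β) * q.1 ^ 2 + (1 + α₂ * β) * q.2 ^ 2) =
      -((σ q + (q.1 ^ 2 + q.2 ^ 2)) ^ 2 + (α₁ * q.1 ^ 2 + α₂ * q.2 ^ 2) ^ 2) := by
    linear_combination heq
  have hsum : (σ q + (q.1 ^ 2 + q.2 ^ 2)) ^ 2 ≤ (C₁ + 2) ^ 2 * ‖q‖ ^ 4 := by
    have hu : σ q + (q.1 ^ 2 + q.2 ^ 2) ≤ (C₁ + 2) * ‖q‖ ^ 2 := by linarith
    have hl : -((C₁ + 2) * ‖q‖ ^ 2) ≤ σ q + (q.1 ^ 2 + q.2 ^ 2) := by linarith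
    calc (σ q + (q.1 ^ 2 + q.2 ^ 2)) ^ 2 ≤ ((C₁ + 2) * ‖q‖ ^ 2) ^ 2 := sq_le_sq' hl hu
      _ = (C₁ + 2) ^ 2 * ‖q‖ ^ 4 := by ring
  have hPsq : (α₁ * q.1 ^ 2 + α₂ * q.2 ^ 2) ^ 2 ≤ M ^ 2 * ‖q‖ ^ 4 := by
    calc (α₁ * q.1 ^ 2 + α₂ * q.2 ^ 2) ^ 2 ≤ (M * ‖q‖ ^ 2) ^ 2 := sq_le_sq' hPl hPu
      _ = M ^ 2 * ‖q‖ ^ 4 := by ring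
  have h2R : (0:ℝ) < 2 * R₀ ^ 2 := by positivity
  have hE' : (σ q + (1 + α₁ * β) * q.1 ^ 2 + (1 + α₂ * β) * q.2 ^ 2) * (2 * R₀ ^ 2) =
      -((σ q + (q.1 ^ 2 + q.2 ^ 2)) ^ 2 + (α₁ * q.1 ^ 2 + α₂ * q.2 ^ 2) ^ 2) := by
    linear_combination hE
  have hEb : |σ q + (1 + α₁ * β) * q.1 ^ 2 + (1 + α₂ * β) * q.2 ^ 2| * (2 * R₀ ^ 2) ≤
      ((C₁ + 2) ^ 2 + M ^ 2) * ‖q‖ ^ 4 := by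
    have habsmul : |σ q + (1 + α₁ * β) * q.1 ^ 2 + (1 + α₂ * β) * q.2 ^ 2| * (2 * R₀ ^ 2)
        = |(σ q + (1 + α₁ * β) * q.1 ^ 2 + (1 + α₂ * β) * q.2 ^ 2) * (2 * R₀ ^ 2)| := by
      rw [abs_mul, abs_of_pos h2R]
    rw [habsmul, hE', abs_neg,
      abs_of_nonneg (by positivity : (0:ℝ) ≤ (σ q + (q.1 ^ 2 + q.2 ^ 2)) ^ 2
        + (α₁ * q.1 ^ 2 + α₂ * q.2 ^ 2) ^ 2)]
    linarith
  have hfinal : |σ q + (1 + α₁ * β) * q.1 ^ 2 + (1 + α₂ * β) * q.2 ^ 2| ≤ K * ‖q‖ ^ 4 := by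
    have : |σ q + (1 + α₁ * β) * q.1 ^ 2 + (1 + α₂ * β) * q.2 ^ 2| ≤
        (((C₁ + 2) ^ 2 + M ^ 2) * ‖q‖ ^ 4) / (2 * R₀ ^ 2) := by
      rw [le_div_iff₀ h2R]; exact hEb
    calc |σ q + (1 + α₁ * β) * q.1 ^ 2 + (1 + α₂ * β) * q.2 ^ 2|
        ≤ (((C₁ + 2) ^ 2 + M ^ 2) * ‖q‖ ^ 4) / (2 * R₀ ^ 2) := this
      _ = K * ‖q‖ ^ 4 := by rw [hK]; ring
  calc ‖σ q + (1 + α₁ * β) * q.1 ^ 2 + (1 + α₂ * β) * q.2 ^ 2‖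
      = |σ q + (1 + α₁ * β) * q.1 ^ 2 + (1 + α₂ * β) * q.2 ^ 2| := by rw [Real.norm_eq_abs]
    _ ≤ K * ‖q‖ ^ 4 := hfinal
    _ = K * ‖(‖q‖ ^ 4)‖ := by rw [Real.norm_eq_abs, abs_of_nonneg (by positivity)]
end
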